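/- For every positive integer d there is a clopen set M ⊆ F(2^{ℤⁿ}) such that: (1) for any distinct x, y ∈ M in the same orbit, ρ(x,y) ≥ d; (2) for every x ∈ F(2^{ℤⁿ}) there is y ∈ M with ρ(x,y) < d. (Basic clopen marker lemma.) -/

import Mathlib

/-- The space `2^{ℤⁿ}` with the product topology. -/
abbrev Space (n : ℕ) : Type := (Fin n → ℤ) → Bool

/-- The Bernoulli shift action: `(g · x)(h) = x(g + h)`. -/
def shift {n : ℕ} (g : Fin n → ℤ) (x : Space n) : Space n := fun h => x (g + h)

/-- The free part `F(2^{ℤⁿ})` of the shift action. -/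
def FreePart (n : ℕ) : Set (Space n) := {x | ∀ g : Fin n → ℤ, g ≠ 0 → shift g x ≠ x}

/-- The sup norm on `ℤⁿ`, valued in `ℕ`. -/
def gnorm {n : ℕ} (g : Fin n → ℤ) : ℕ := Finset.univ.sup fun i => (g i).natAbs

/-!
Write `R x y` for `ρ(x, y) < d`. Every `x` in the free part has a clopen neighbourhood
containing no two distinct `R`-related points, since `x` can be separated by a clopen set from
each of its finitely many shifts `g · x` with `0 < ‖g‖ < d`. By second countability countably
many such sets `U₀, U₁, …` cover the free part. Choose markers greedily: at stage `k` add the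
points of `Uₖ` that are not `R`-related to a marker chosen so far. Each stage is clopen, no two
distinct markers are `R`-related, every point of the free part is `R`-related to a marker, and
on `Uₖ` the marker set agrees with the clopen stage `k + 1`, which makes it relatively clopen.
-/

section Greedy

variable {X : Type*} (R : X → X → Prop)

def relNbhd (A : Set X) : Set X := {x | ∃ y ∈ A, R x y}

lemma relNbhd_mono : Monotone (relNbhd R) :=
  fun _ _ hAB _ ⟨y, hy, hxy⟩ => ⟨y, hAB hy, hxy⟩

variable (U : ℕ → Set X)

def greedyStage : ℕ → Set X
  | 0 => ∅
  | k + 1 => greedyStage k ∪ (U k \ relNbhd R (greedyStage k))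

def greedyMarkers : Set X := ⋃ k, greedyStage R U k

variable {R U}

lemma greedyStage_mono : Monotone (greedyStage R U) :=
  monotone_nat_of_le_succ fun _ => Set.subset_union_left

lemma mem_greedyStage {x : X} {k : ℕ} :
    x ∈ greedyStage R U k ↔ ∃ j < k, x ∈ U j \ relNbhd R (greedyStage R U j) := by
  induction k with
  | zero => simp [greedyStage]
  | succ k ih =>
    simp only [greedyStage, Set.mem_union, ih, Nat.lt_succ_iff_lt_or_eq, or_and_right,
      exists_or, exists_eq_left]

lemma mem_greedyMarkers {x : X} :
    x ∈ greedyMarkers R U ↔ ∃ k, x ∈ U k \ relNbhd R (greedyStage R U k) := by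
  simp only [greedyMarkers, Set.mem_iUnion, mem_greedyStage]
  exact ⟨fun ⟨_, j, _, hj⟩ => ⟨j, hj⟩, fun ⟨j, hj⟩ => ⟨j + 1, j, j.lt_succ_self, hj⟩⟩

lemma greedyStage_subset_greedyMarkers (k : ℕ) : greedyStage R U k ⊆ greedyMarkers R U :=
  Set.subset_iUnion (greedyStage R U) k

lemma pairwise_greedyMarkers (hsymm : ∀ x y, R x y → R y x)
    (hU : ∀ k, (U k).Pairwise (¬R · ·)) :
    (greedyMarkers R U).Pairwise (¬R · ·) := by
  intro x hx y hy hxy hR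
  obtain ⟨k, hxU, hxN⟩ := mem_greedyMarkers.mp hx
  obtain ⟨l, hyU, hyN⟩ := mem_greedyMarkers.mp hy
  rcases lt_trichotomy k l with hkl | rfl | hlk
  · exact hyN ⟨x, mem_greedyStage.mpr ⟨k, hkl, hxU, hxN⟩, hsymm x y hR⟩
  · exact hU k hxU hyU hxy hR
  · exact hxN ⟨y, mem_greedyStage.mpr ⟨l, hlk, hyU, hyN⟩, hR⟩

lemma mem_greedyMarkers_iff_of_mem {x : X} {k : ℕ} (hx : x ∈ U k) :
    x ∈ greedyMarkers R U ↔ x ∈ greedyStage R U (k + 1) := by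
  refine ⟨fun hxM => ?_, fun hx' => greedyStage_subset_greedyMarkers _ hx'⟩
  by_contra hxk
  have hxN : x ∈ relNbhd R (greedyStage R U k) := by
    by_contra hxN
    exact hxk (Or.inr ⟨hx, hxN⟩)
  obtain ⟨j, hjU, hjN⟩ := mem_greedyMarkers.mp hxM
  rcases le_or_gt j k with hjk | hkj
  · exact hxk <| greedyStage_mono (Nat.succ_le_succ hjk) <|
      mem_greedyStage.mpr ⟨j, j.lt_succ_self, hjU, hjN⟩
  · exact hjN (relNbhd_mono R (greedyStage_mono hkj.le) hxN)

lemma mem_relNbhd_greedyMarkers (hrefl : ∀ x, R x x) {x : X} {k : ℕ} (hx : x ∈ U k) :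
    x ∈ relNbhd R (greedyMarkers R U) := by
  by_cases hxN : x ∈ relNbhd R (greedyStage R U k)
  · exact relNbhd_mono R (greedyStage_subset_greedyMarkers k) hxN
  · exact ⟨x, mem_greedyMarkers.mpr ⟨k, hx, hxN⟩, hrefl x⟩

variable [TopologicalSpace X]

lemma isClopen_greedyStage (hR : ∀ A, IsClopen A → IsClopen (relNbhd R A))
    (hU : ∀ k, IsClopen (U k)) (k : ℕ) : IsClopen (greedyStage R U k) := by
  induction k with
  | zero => exact isClopen_empty
  | succ k ih => exact ih.union ((hU k).diff (hR _ ih))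

lemma isClopen_preimage_greedyMarkers (hR : ∀ A, IsClopen A → IsClopen (relNbhd R A))
    (hU : ∀ k, IsClopen (U k)) {S : Set X} (hS : S ⊆ ⋃ k, U k) :
    IsClopen ((↑) ⁻¹' greedyMarkers R U : Set S) := by
  have hstage := isClopen_greedyStage hR hU
  refine ⟨?_, (isOpen_iUnion fun k => (hstage k).isOpen).preimage continuous_subtype_val⟩
  have hcompl : ((↑) ⁻¹' greedyMarkers R U : Set S)ᶜ =
      (↑) ⁻¹' ⋃ k, U k \ greedyStage R U (k + 1) := by
    ext ⟨x, hxS⟩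
    obtain ⟨k, hxU⟩ := Set.mem_iUnion.mp (hS hxS)
    simp only [Set.mem_compl_iff, Set.mem_preimage, Set.mem_iUnion, Set.mem_sdiff]
    refine ⟨fun hxM => ⟨k, hxU, (mem_greedyMarkers_iff_of_mem hxU).not.mp hxM⟩, ?_⟩
    rintro ⟨j, hjU, hjN⟩
    exact (mem_greedyMarkers_iff_of_mem hjU).not.mpr hjN
  rw [← isOpen_compl_iff, hcompl]
  exact (isOpen_iUnion fun k => ((hU k).diff (hstage (k + 1))).isOpen).preimage
    continuous_subtype_val

end Greedy

section Cover

variable {X : Type*} [TopologicalSpace X]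

lemma exists_isClopen_disjoint_preimage [TotallySeparatedSpace X] {f : X → X}
    (hf : Continuous f) {x : X} (hx : f x ≠ x) :
    ∃ U, IsClopen U ∧ x ∈ U ∧ Disjoint U (f ⁻¹' U) := by
  obtain ⟨V, hV, hxV, hfxV⟩ := exists_isClopen_of_totally_separated hx.symm
  refine ⟨V ∩ f ⁻¹' Vᶜ, hV.inter (hV.compl.preimage hf), ⟨hxV, hfxV⟩, ?_⟩
  exact Set.disjoint_left.mpr fun _ hy hfy => hy.2 hfy.1

lemma exists_isClopen_forall_disjoint_preimage [TotallySeparatedSpace X] {ι : Type*}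
    {s : Set ι} (hs : s.Finite) {f : ι → X → X} (hf : ∀ i ∈ s, Continuous (f i)) {x : X}
    (hx : ∀ i ∈ s, f i x ≠ x) :
    ∃ U, IsClopen U ∧ x ∈ U ∧ ∀ i ∈ s, Disjoint U (f i ⁻¹' U) := by
  choose! V hV hxV hVf using fun i hi => exists_isClopen_disjoint_preimage (hf i hi) (hx i hi)
  refine ⟨⋂ i ∈ s, V i, hs.isClopen_biInter hV, Set.mem_iInter₂.mpr hxV, fun i hi => ?_⟩
  have hsub : (⋂ i ∈ s, V i) ⊆ V i := Set.biInter_subset_of_mem hi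
  exact (hVf i hi).mono hsub (Set.preimage_mono hsub)

lemma exists_seq_isClopen_cover [SecondCountableTopology X] {P : Set X → Prop} (hP : P ∅)
    {S : Set X} (hS : ∀ x ∈ S, ∃ U, IsClopen U ∧ x ∈ U ∧ P U) :
    ∃ U : ℕ → Set X, (∀ k, IsClopen (U k)) ∧ (∀ k, P (U k)) ∧ S ⊆ ⋃ k, U k := by
  have hV : ∀ x, ∃ V, IsClopen V ∧ (x ∈ S → x ∈ V) ∧ P V := fun x => by
    by_cases hx : x ∈ S
    · obtain ⟨V, hV, hxV, hPV⟩ := hS x hx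
      exact ⟨V, hV, fun _ => hxV, hPV⟩
    · exact ⟨∅, isClopen_empty, fun h => absurd h hx, hP⟩
  choose V hVclopen hxV hPV using hV
  have hSV : S ⊆ ⋃ x, V x := fun x hx => Set.mem_iUnion.mpr ⟨x, hxV x hx⟩
  obtain ⟨T, hTc, hTV⟩ := TopologicalSpace.isOpen_iUnion_countable V fun x => (hVclopen x).isOpen
  rw [← hTV] at hSV
  rcases T.eq_empty_or_nonempty with rfl | hTne
  · exact ⟨fun _ => ∅, fun _ => isClopen_empty, fun _ => hP, by simpa using hSV⟩
  · obtain ⟨e, rfl⟩ := hTc.exists_eq_range hTne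
    exact ⟨V ∘ e, fun k => hVclopen _, fun k => hPV _, by rwa [Set.biUnion_range] at hSV⟩

end Cover

theorem exists_isClopen_maximal_pairwise {X : Type*} [TopologicalSpace X]
    [SecondCountableTopology X] {R : X → X → Prop} (hrefl : ∀ x, R x x)
    (hsymm : ∀ x y, R x y → R y x)
    (hR : ∀ A, IsClopen A → IsClopen (relNbhd R A)) {S : Set X}
    (hSR : ∀ x ∈ S, ∀ y, R x y → y ∈ S)
    (hS : ∀ x ∈ S, ∃ U, IsClopen U ∧ x ∈ U ∧ U.Pairwise (¬R · ·)) :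
    ∃ M ⊆ S, IsClopen ((↑) ⁻¹' M : Set S) ∧ M.Pairwise (¬R · ·) ∧ S ⊆ relNbhd R M := by
  obtain ⟨U, hUclopen, hUpair, hSU⟩ := exists_seq_isClopen_cover (Set.pairwise_empty _) hS
  refine ⟨greedyMarkers R U ∩ S, Set.inter_subset_right, ?_,
    (pairwise_greedyMarkers hsymm hUpair).mono Set.inter_subset_left, fun x hx => ?_⟩
  · rw [Subtype.preimage_coe_inter_self]
    exact isClopen_preimage_greedyMarkers hR hUclopen hSU
  · obtain ⟨k, hxU⟩ := Set.mem_iUnion.mp (hSU hx)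
    obtain ⟨y, hyM, hxy⟩ := mem_relNbhd_greedyMarkers hrefl hxU
    exact ⟨y, ⟨hyM, hSR x hx y hxy⟩, hxy⟩

section Shift

variable {n : ℕ}

lemma shift_zero (x : Space n) : shift 0 x = x := by
  funext h
  simp [shift]

lemma shift_shift (g h : Fin n → ℤ) (x : Space n) : shift g (shift h x) = shift (h + g) x := by
  funext k
  simp [shift, add_assoc]

lemma continuous_shift (g : Fin n → ℤ) : Continuous (shift g : Space n → Space n) :=
  continuous_pi fun h => continuous_apply (g + h)

lemma shift_mem_freePart {x : Space n} (hx : x ∈ FreePart n) (g : Fin n → ℤ) :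
    shift g x ∈ FreePart n := by
  intro h hh hfix
  apply hx h hh
  calc shift h x = shift (-g) (shift h (shift g x)) := by
        rw [shift_shift, shift_shift]
        congr 1
        abel
    _ = x := by rw [hfix, shift_shift, add_neg_cancel, shift_zero]

lemma natAbs_le_gnorm (g : Fin n → ℤ) (i : Fin n) : (g i).natAbs ≤ gnorm g :=
  Finset.le_sup (f := fun i => (g i).natAbs) (Finset.mem_univ i)

lemma gnorm_neg (g : Fin n → ℤ) : gnorm (-g) = gnorm g := by
  simp [gnorm]

lemma finite_setOf_gnorm_lt (d : ℕ) : {g : Fin n → ℤ | gnorm g < d}.Finite := by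
  refine (Set.finite_Icc (-(d : Fin n → ℤ)) d).subset fun g hg => ?_
  replace hg : gnorm g < d := hg
  constructor <;> intro i <;> have := natAbs_le_gnorm g i <;>
    simp only [Pi.neg_apply, Pi.natCast_apply] <;> omega

/-- `ShiftNear d x y` says `ρ(x, y) < d`. -/
def ShiftNear (d : ℕ) (x y : Space n) : Prop := ∃ g, gnorm g < d ∧ shift g x = y

lemma mem_freePart_of_shiftNear {d : ℕ} {x y : Space n} (hx : x ∈ FreePart n)
    (hxy : ShiftNear d x y) : y ∈ FreePart n := by
  obtain ⟨g, -, rfl⟩ := hxy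
  exact shift_mem_freePart hx g

lemma shiftNear_refl {d : ℕ} (hd : 1 ≤ d) (x : Space n) : ShiftNear d x x :=
  ⟨0, (by simp [gnorm] : gnorm (0 : Fin n → ℤ) = 0) ▸ hd, shift_zero x⟩

lemma shiftNear_symm {d : ℕ} {x y : Space n} (hxy : ShiftNear d x y) : ShiftNear d y x := by
  obtain ⟨g, hg, rfl⟩ := hxy
  refine ⟨-g, by rwa [gnorm_neg], ?_⟩
  rw [shift_shift, add_neg_cancel, shift_zero]

lemma isClopen_relNbhd_shiftNear (d : ℕ) {A : Set (Space n)} (hA : IsClopen A) :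
    IsClopen (relNbhd (ShiftNear d) A) := by
  have hA' : relNbhd (ShiftNear d) A = ⋃ g ∈ {g : Fin n → ℤ | gnorm g < d}, shift g ⁻¹' A := by
    ext x
    simp only [relNbhd, ShiftNear, Set.mem_iUnion, Set.mem_preimage, exists_prop]
    exact ⟨fun ⟨_, hy, g, hg, hgy⟩ => ⟨g, hg, hgy ▸ hy⟩, fun ⟨g, hg, hgx⟩ => ⟨_, hgx, g, hg, rfl⟩⟩
  rw [hA']
  exact (finite_setOf_gnorm_lt d).isClopen_biUnion fun g _ => hA.preimage (continuous_shift g)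

lemma exists_isClopen_pairwise_not_shiftNear (d : ℕ) {x : Space n} (hx : x ∈ FreePart n) :
    ∃ U, IsClopen U ∧ x ∈ U ∧ U.Pairwise (¬ShiftNear d · ·) := by
  obtain ⟨U, hU, hxU, hdisj⟩ := exists_isClopen_forall_disjoint_preimage
    ((finite_setOf_gnorm_lt d).sdiff (t := {0})) (fun g _ => continuous_shift g)
    (fun g hg => hx g hg.2)
  refine ⟨U, hU, hxU, ?_⟩
  rintro y hy _ hgy hyz ⟨g, hg, rfl⟩
  have hg0 : g ≠ 0 := by
    rintro rfl
    exact hyz (shift_zero y).symm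
  exact Set.disjoint_left.mp (hdisj g ⟨hg, hg0⟩) hy hgy

end Shift

theorem stmt19_general (n d : ℕ) (hd : 1 ≤ d) :
    ∃ M : Set (Space n),
      M ⊆ FreePart n ∧
      IsClopen {x : FreePart n | (x : Space n) ∈ M} ∧
      (∀ x ∈ M, ∀ g : Fin n → ℤ, g ≠ 0 → shift g x ∈ M → d ≤ gnorm g) ∧
      (∀ x ∈ FreePart n, ∃ g : Fin n → ℤ, gnorm g < d ∧ shift g x ∈ M) := by
  obtain ⟨M, hMF, hMclopen, hMsep, hMcover⟩ := exists_isClopen_maximal_pairwise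
    (shiftNear_refl hd) (fun _ _ => shiftNear_symm) (fun _ => isClopen_relNbhd_shiftNear d)
    (fun _ hx _ => mem_freePart_of_shiftNear hx)
    (fun _ => exists_isClopen_pairwise_not_shiftNear d)
  refine ⟨M, hMF, hMclopen, fun x hx g hg hgx => ?_, fun x hx => ?_⟩
  · by_contra! hlt
    exact hMsep hx hgx (hMF hx g hg).symm ⟨g, hlt, rfl⟩
  · obtain ⟨_, hy, g, hg, rfl⟩ := hMcover hx
    exact ⟨g, hg, hy⟩

theorem stmt19 (n d : ℕ) (hn : 1 ≤ n) (hd : 1 ≤ d) :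
    ∃ M : Set (Space n),
      M ⊆ FreePart n ∧
      IsClopen {x : FreePart n | (x : Space n) ∈ M} ∧
      (∀ x ∈ M, ∀ g : Fin n → ℤ, g ≠ 0 → shift g x ∈ M → d ≤ gnorm g) ∧
      (∀ x ∈ FreePart n, ∃ g : Fin n → ℤ, gnorm g < d ∧ shift g x ∈ M) :=
  stmt19_general n d hd
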